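/- arXiv:1704.00018 — 2 statements merged into one kernel-verified Lean document; each statement's English description precedes it below -/
import Mathlib

section
/- Let $M \geq 3$. Given integers $m \geq M+1$, $n \geq 2$, $a,b,\nu > 0$ with $bn = \nu m + 1$ and $(M+1)b = am + (M+1)$, and nonnegative integers $a_E, b_E, \nu_E, a'_E, b'_E, d, l$ with $l \geq 2$ satisfying $dn - \nu(lm - b'_E) - \nu_E = l$, $-(M+1)d + a(lm - b'_E) + a_E = -(M+1)l + a'_E$, and $dm - b(lm - b'_E) - b_E = 0$, prove that $(M+1)b_E + m a'_E = (M+1)b'_E + m a_E$ and $b_E n = m\nu_E + b'_E$. -/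
theorem stmt_3 (M m n a b ν : ℤ) (hM : 3 ≤ M) (hmM : M + 1 ≤ m) (hn : 2 ≤ n)
    (ha : 0 < a) (hb : 0 < b) (hν : 0 < ν)
    (h1 : b * n = ν * m + 1) (h2 : (M + 1) * b = a * m + (M + 1))
    (aE bE νE a'E b'E d l : ℤ)
    (haE : 0 ≤ aE) (hbE : 0 ≤ bE) (hνE : 0 ≤ νE) (ha'E : 0 ≤ a'E) (hb'E : 0 ≤ b'E)
    (hd : 0 ≤ d) (hl : 2 ≤ l)
    (e1 : d * n - ν * (l * m - b'E) - νE = l)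
    (e2 : -(M + 1) * d + a * (l * m - b'E) + aE = -(M + 1) * l + a'E)
    (e3 : d * m - b * (l * m - b'E) - bE = 0) :
    (M + 1) * bE + m * a'E = (M + 1) * b'E + m * aE ∧ bE * n = m * νE + b'E := by
  constructor
  · linear_combination -(M + 1) * e3 - m * e2 - (l * m - b'E) * h2
  · linear_combination -n * e3 - (l * m - b'E) * h1 + m * e1
end

section
/- Let $N \geq 3$ and let $G$ be a directed graph on $\{1,\dots,N\}$ with edges $i \to j$ only for $i > j$, such that $i+1 \to i$ for all $1 \leq i < N$. Suppose for some $1 \leq k_1 < k \leq N$ with $k - k_1 \geq 3$, the only edges between vertices in $\{k_1+1, \dots, k\}$ are the consecutive ones $i+1 \to i$, and moreover no vertex $e > k$ has an edge to any vertex $j \leq k - 2$ with $j \geq k_1+1$. Then the path counts from $N$ satisfy $p_{k_1+1} = p_{k_1+2} = \cdots = p_{k-1}$. -/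
/-- Number of directed paths from `i` to `j` in a directed graph on `ℕ`
whose edges go to smaller vertices. -/
def pathCount (E : ℕ → ℕ → Bool) : ℕ → ℕ → ℕ
  | i, j =>
    if i = j then 1
    else ∑ s ∈ ((Finset.range i).filter (fun s => E i s)).attach,
        pathCount E s.1 j
termination_by i _ => i
decreasing_by
  have hs := s.2
  simp only [Finset.mem_filter, Finset.mem_range] at hs
  exact hs.1

lemma pathCount_attach (E : ℕ → ℕ → Bool) (i j : ℕ) (h : i ≠ j) :
    pathCount E i j = ∑ s ∈ ((Finset.range i).filter (fun s => E i s)), pathCount E s j := by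
  rw [pathCount, if_neg h]; exact Finset.sum_attach _ (fun s => pathCount E s j)

lemma pathCount_lt (E : ℕ → ℕ → Bool) : ∀ i j, i < j → pathCount E i j = 0 := by
  intro i
  induction i using Nat.strong_induction_on with
  | _ i ih =>
    intro j hij
    rw [pathCount_attach E i j hij.ne]
    apply Finset.sum_eq_zero
    intro t ht
    simp only [Finset.mem_filter, Finset.mem_range] at ht
    exact ih t ht.1 j (ht.1.trans hij)

lemma pathCount_self (E : ℕ → ℕ → Bool) (i : ℕ) : pathCount E i i = 1 := by
  rw [pathCount, if_pos rfl]

theorem stmt_18 (N : ℕ) (hN : 3 ≤ N) (E : ℕ → ℕ → Bool)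
    (hE : ∀ i j, E i j = true → 1 ≤ j ∧ j < i ∧ i ≤ N)
    (hconsec : ∀ i, 1 ≤ i → i < N → E (i + 1) i = true)
    (k₁ k : ℕ) (hk₁ : 1 ≤ k₁) (hk₁k : k₁ < k) (hkN : k ≤ N) (hgap : 3 ≤ k - k₁)
    -- within {k₁+1, ..., k} the only edges are the consecutive ones
    (hchain : ∀ i j, k₁ + 1 ≤ j → j < i → i ≤ k → E i j = true → i = j + 1)
    -- no vertex above k has an edge into {k₁+1, ..., k-2}
    (hnoback : ∀ e j, k < e → k₁ + 1 ≤ j → j ≤ k - 2 → E e j = false) :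
    ∀ i, k₁ + 1 ≤ i → i ≤ k - 1 → pathCount E N i = pathCount E N (k₁ + 1) := by

  have key : ∀ j, k₁ + 1 ≤ j → j ≤ k - 2 → ∀ s, j + 1 ≤ s → s ≤ N →
      pathCount E s j = pathCount E s (j + 1) := by
    intro j hj1 hj2 s
    induction s using Nat.strong_induction_on with
    | _ s ih =>
      intro hs1 hs2
      rcases eq_or_lt_of_le hs1 with heq | hlt
      · rw [← heq, pathCount_self, pathCount_attach E (j+1) j (by omega)]
        have hmem : j ∈ (Finset.range (j+1)).filter (fun t => E (j+1) t) := by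
          simp only [Finset.mem_filter, Finset.mem_range]
          exact ⟨by omega, hconsec j (by omega) (by omega)⟩
        rw [Finset.sum_eq_single_of_mem j hmem]
        · exact pathCount_self E j
        · intro t ht htne
          simp only [Finset.mem_filter, Finset.mem_range] at ht
          exact pathCount_lt E t j (by omega)
      · rw [pathCount_attach E s j (by omega), pathCount_attach E s (j+1) (by omega)]
        apply Finset.sum_congr rfl
        intro t ht
        simp only [Finset.mem_filter, Finset.mem_range] at ht
        rcases lt_trichotomy t j with h | h | h
        · rw [pathCount_lt E t j h, pathCount_lt E t (j+1) (by omega)]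
        · exfalso
          subst h
          by_cases hsk : s ≤ k
          · have := hchain s t (by omega) (by omega) hsk ht.2; omega
          · have := hnoback s t (by omega) hj1 hj2
            rw [ht.2] at this; simp at this
        · exact ih t ht.1 (by omega) (by omega)
  intro i hi1
  induction i, hi1 using Nat.le_induction with
  | base => intro _; rfl
  | succ n hn ih =>
    intro h2
    rw [← key n hn (by omega) N (by omega) le_rfl]
    exact ih (by omega)
end
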